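/- Let M be a simple matroid of rank r with 3r-3-δ elements where 0 ≤ δ ≤ r-2, in which every line has at most 3 elements, the characteristic roots of M are all integers, and χ(M;2) = 0. Then M has at least 3r-5-2δ three-point lines. -/

import Mathlib

open Finset Polynomial

section MatroidDefs

variable {α : Type} [Fintype α] [DecidableEq α]

/-- The rank of a set `X` in a matroid `M`: the largest size of an independent subset
of `X`. -/
noncomputable def mrk (M : Matroid α) (X : Set α) : ℕ :=
  sSup {n | ∃ I, M.Indep I ∧ I ⊆ X ∧ I.ncard = n}

/-- A matroid is simple if every pair of elements of the ground set is independent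
(equivalently, it has no loops and no parallel pairs). -/
def mSimple (M : Matroid α) : Prop :=
  ∀ e f, e ∈ M.E → f ∈ M.E → M.Indep {e, f}

/-- The characteristic polynomial of a matroid on the ground set `α`, via the Whitney
rank expansion `χ(M;λ) = Σ_{A ⊆ E} (-1)^{|A|} λ^{r(E) - r(A)}` (which agrees with the
Möbius-function definition for loopless matroids). -/
noncomputable def charPoly (M : Matroid α) : Polynomial ℤ :=
  ∑ A : Finset α, C ((-1 : ℤ) ^ A.card) * X ^ (mrk M Set.univ - mrk M (A : Set α))

/-- The number of lines (rank-2 flats) of `M` with exactly `k` points. -/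
noncomputable def lineCount (M : Matroid α) (k : ℕ) : ℕ :=
  Nat.card {F : Set α | M.IsFlat F ∧ mrk M F = 2 ∧ F.ncard = k}

/-- Every line (rank-2 flat) of `M` has at most 3 points. -/
def linesAtMost3 (M : Matroid α) : Prop :=
  ∀ F : Set α, M.IsFlat F → mrk M F = 2 → F.ncard ≤ 3

/-- An integer polynomial has only real roots. -/
def onlyRealRoots (p : Polynomial ℤ) : Prop :=
  (p.map (Int.castRingHom ℝ)).Splits

/-- An integer polynomial has only integral roots: every complex root is an integer. -/
def onlyIntegerRoots (p : Polynomial ℤ) : Prop :=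
  ∀ z ∈ (p.map (Int.castRingHom ℂ)).roots, ∃ k : ℤ, z = (k : ℂ)

/-- A matroid is connected if no proper nonempty subset of the ground set gives an
additive separation of the rank. -/
def mConnected (M : Matroid α) : Prop :=
  M.E.Nonempty ∧ ∀ A : Set α, A ⊆ M.E → A.Nonempty → (M.E \ A).Nonempty →
    mrk M A + mrk M (M.E \ A) ≠ mrk M M.E

/-- A flat `X` of `M` is modular if every line `L` with
`rank(X ∨ L) = rank(X) + 1` meets `X`. -/
def modularFlat (M : Matroid α) (Y : Set α) : Prop :=
  M.IsFlat Y ∧ ∀ L : Set α, M.IsFlat L → mrk M L = 2 →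
    mrk M (Y ∪ L) = mrk M Y + 1 → (Y ∩ L).Nonempty

end MatroidDefs

/-!
Since `M` is loopless, `χ(M;λ)` is monic of degree `r`, so by integrality of the roots
`χ(M;λ) = ∏ᵢ (λ - aᵢ)` with `aᵢ ∈ ℤ`. In a simple matroid whose lines have at most three points,
the sets of rank 1 are the singletons and the sets of rank 2 are the pairs and the 3-point lines;
the Whitney expansion then gives `∑ aᵢ = e` and `∑_{i<j} aᵢaⱼ = C(e,2) - γ₃`, hence
`∑ aᵢ² = e + 2γ₃`. Since `(a - 2)(a - 3) ≥ 0` for every integer `a`, with value `2` at the root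
`a = 1`, we get `∑ aᵢ² - 5 ∑ aᵢ + 6r ≥ 2`, i.e. `2γ₃ ≥ 4e - 6r + 2`, which is the claim for
`e = 3r - 3 - δ`.
-/

section Rank

variable {α : Type} [Finite α] {M : Matroid α}

lemma cast_mrk_eq_eRk (M : Matroid α) (X : Set α) : (mrk M X : ℕ∞) = M.eRk X := by
  obtain ⟨I, hI⟩ := M.exists_isBasis' X
  have hmax : IsGreatest {n | ∃ I, M.Indep I ∧ I ⊆ X ∧ I.ncard = n} I.ncard := by
    refine ⟨⟨I, hI.indep, hI.subset, rfl⟩, ?_⟩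
    rintro _ ⟨J, hJ, hJX, rfl⟩
    have hJI := hJ.encard_le_eRk_of_subset hJX
    rwa [← hI.encard_eq_eRk, ← J.toFinite.cast_ncard_eq, ← I.toFinite.cast_ncard_eq,
      Nat.cast_le] at hJI
  rw [mrk, hmax.csSup_eq, I.toFinite.cast_ncard_eq, hI.encard_eq_eRk]

lemma mrk_mono {X Y : Set α} (hXY : X ⊆ Y) : mrk M X ≤ mrk M Y := by
  have h := M.eRk_mono hXY
  rwa [← cast_mrk_eq_eRk, ← cast_mrk_eq_eRk, Nat.cast_le] at h

lemma mrk_le_ncard (X : Set α) : mrk M X ≤ X.ncard := by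
  have h := M.eRk_le_encard X
  rwa [← cast_mrk_eq_eRk, ← X.toFinite.cast_ncard_eq, Nat.cast_le] at h

lemma mrk_closure (X : Set α) : mrk M (M.closure X) = mrk M X := by
  have h := M.eRk_closure_eq X
  rwa [← cast_mrk_eq_eRk, ← cast_mrk_eq_eRk, Nat.cast_inj] at h

lemma Matroid.Indep.mrk_eq_ncard {I : Set α} (hI : M.Indep I) : mrk M I = I.ncard := by
  have h := hI.eRk_eq_encard
  rwa [← cast_mrk_eq_eRk, ← I.toFinite.cast_ncard_eq, Nat.cast_inj] at h

lemma mSimple.indep_of_ncard_le_two (hE : M.E = Set.univ) (hs : mSimple M) {X : Set α}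
    (hX : X.ncard ≤ 2) : M.Indep X := by
  have hpair (a b : α) : M.Indep {a, b} := hs a b (by simp [hE]) (by simp [hE])
  interval_cases h : X.ncard
  · rw [(Set.ncard_eq_zero (s := X)).1 h]
    exact M.empty_indep
  · obtain ⟨a, rfl⟩ := Set.ncard_eq_one.1 h
    simpa using hpair a a
  · obtain ⟨a, b, -, rfl⟩ := Set.ncard_eq_two.1 h
    exact hpair a b

lemma mSimple.min_ncard_two_le_mrk (hE : M.E = Set.univ) (hs : mSimple M) (X : Set α) :
    min X.ncard 2 ≤ mrk M X := by
  obtain ⟨Y, hYX, hY⟩ := Set.exists_subset_card_eq (min_le_left X.ncard 2)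
  rw [← hY, ← (hs.indep_of_ncard_le_two hE (hY ▸ min_le_right _ _)).mrk_eq_ncard]
  exact mrk_mono hYX

lemma isFlat_of_mrk_eq_two (hE : M.E = Set.univ) (hl : linesAtMost3 M) {X : Set α}
    (hX : mrk M X = 2) (hX3 : 3 ≤ X.ncard) : M.IsFlat X := by
  have hXcl : X ⊆ M.closure X := M.subset_closure X (by simp [hE])
  have hcl3 : (M.closure X).ncard ≤ 3 := hl _ (M.isFlat_closure X) (by rw [mrk_closure, hX])
  rw [Set.eq_of_subset_of_ncard_le hXcl (by omega)]
  exact M.isFlat_closure X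

end Rank

section CharPoly

open scoped Classical

variable {α : Type} [Fintype α] {M : Matroid α}

lemma coeff_charPoly (M : Matroid α) (n : ℕ) :
    (charPoly M).coeff n =
      ∑ A ∈ univ.filter fun A : Finset α => n = mrk M Set.univ - mrk M ↑A, (-1 : ℤ) ^ A.card := by
  simp only [charPoly, finsetSum_coeff, coeff_C_mul, coeff_X_pow, mul_ite, mul_one, mul_zero,
    Finset.sum_ite, Finset.sum_const_zero, add_zero]

lemma coeff_charPoly_of_lt {n : ℕ} (hn : mrk M Set.univ < n) : (charPoly M).coeff n = 0 := by
  rw [coeff_charPoly, Finset.filter_false_of_mem fun A _ => by omega, Finset.sum_empty]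

lemma coeff_charPoly_rank_sub {k : ℕ} (hk : k ≤ mrk M Set.univ) :
    (charPoly M).coeff (mrk M Set.univ - k) = ∑ A ∈ univ.filter fun A : Finset α => mrk M ↑A = k,
      (-1 : ℤ) ^ A.card := by
  rw [coeff_charPoly]
  refine Finset.sum_congr (Finset.filter_congr fun A _ => ?_) fun _ _ => rfl
  have := mrk_mono (M := M) (Set.subset_univ (A : Set α))
  omega

lemma eval_one_charPoly [Nonempty α] (M : Matroid α) : (charPoly M).eval 1 = 0 := by
  simp only [charPoly, eval_finsetSum, eval_mul, eval_C, eval_pow, eval_X, one_pow, mul_one]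
  rw [← Finset.powerset_univ]
  exact Finset.sum_powerset_neg_one_pow_card_of_nonempty Finset.univ_nonempty

lemma mSimple.min_card_two_le_mrk_le_card (hE : M.E = Set.univ) (hs : mSimple M) (A : Finset α) :
    min A.card 2 ≤ mrk M ↑A ∧ mrk M ↑A ≤ A.card := by
  simpa using And.intro (hs.min_ncard_two_le_mrk hE ↑A) (mrk_le_ncard (M := M) ↑A)

lemma mrk_eq_two_iff (hE : M.E = Set.univ) (hs : mSimple M) (hl : linesAtMost3 M)
    (A : Finset α) :
    mrk M ↑A = 2 ↔ A.card = 2 ∨ (M.IsFlat ↑A ∧ mrk M ↑A = 2 ∧ A.card = 3) := by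
  have hbounds := hs.min_card_two_le_mrk_le_card hE A
  refine ⟨fun h2 => ?_, by omega⟩
  obtain hA | hA : A.card = 2 ∨ 3 ≤ A.card := by omega
  · exact Or.inl hA
  · have hflat := isFlat_of_mrk_eq_two hE hl h2 (by simpa using hA)
    have h3 := hl _ hflat h2
    rw [Set.ncard_coe_finset] at h3
    exact Or.inr ⟨hflat, h2, by omega⟩

lemma lineCount_eq_card (M : Matroid α) (k : ℕ) :
    lineCount M k = #{A : Finset α | M.IsFlat ↑A ∧ mrk M ↑A = 2 ∧ A.card = k} := by
  rw [lineCount, ← Fintype.card_subtype, ← Nat.card_eq_fintype_card]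
  exact Nat.card_congr (Fintype.finsetEquivSet.subtypeEquiv fun A => by simp).symm

lemma coeff_charPoly_rank (hE : M.E = Set.univ) (hs : mSimple M) :
    (charPoly M).coeff (mrk M Set.univ) = 1 := by
  have hfilter : ({A : Finset α | mrk M ↑A = 0} : Finset (Finset α)) = {∅} := by
    ext A
    have := hs.min_card_two_le_mrk_le_card hE A
    simp only [Finset.mem_filter, Finset.mem_univ, true_and, Finset.mem_singleton,
      ← Finset.card_eq_zero]
    omega
  simpa [hfilter] using coeff_charPoly_rank_sub (M := M) (Nat.zero_le _)

lemma natDegree_charPoly (hE : M.E = Set.univ) (hs : mSimple M) :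
    (charPoly M).natDegree = mrk M Set.univ :=
  natDegree_eq_of_le_of_coeff_ne_zero
    (natDegree_le_iff_coeff_eq_zero.2 fun _ hn => coeff_charPoly_of_lt (by exact_mod_cast hn))
    (by rw [coeff_charPoly_rank hE hs]; exact one_ne_zero)

lemma monic_charPoly (hE : M.E = Set.univ) (hs : mSimple M) : (charPoly M).Monic := by
  rw [Monic, leadingCoeff, natDegree_charPoly hE hs, coeff_charPoly_rank hE hs]

lemma coeff_charPoly_rank_sub_one (hE : M.E = Set.univ) (hs : mSimple M)
    (hr : 1 ≤ mrk M Set.univ) :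
    (charPoly M).coeff (mrk M Set.univ - 1) = -Fintype.card α := by
  have hfilter : ({A : Finset α | mrk M ↑A = 1} : Finset (Finset α)) =
      univ.powersetCard 1 := by
    ext A
    have := hs.min_card_two_le_mrk_le_card hE A
    simp only [Finset.mem_filter, Finset.mem_univ, true_and, Finset.mem_powersetCard_univ]
    omega
  rw [coeff_charPoly_rank_sub hr, hfilter, Finset.sum_congr rfl fun A hA => by
    rw [(Finset.mem_powersetCard_univ.1 hA), pow_one]]
  simp

lemma coeff_charPoly_rank_sub_two (hE : M.E = Set.univ) (hs : mSimple M)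
    (hl : linesAtMost3 M) (hr : 2 ≤ mrk M Set.univ) :
    (charPoly M).coeff (mrk M Set.univ - 2) = (Fintype.card α).choose 2 - lineCount M 3 := by
  have hfilter : univ.filter (fun A : Finset α => mrk M ↑A = 2) = univ.powersetCard 2 ∪
      univ.filter fun A : Finset α => M.IsFlat ↑A ∧ mrk M ↑A = 2 ∧ A.card = 3 := by
    ext A
    simp only [Finset.mem_filter, Finset.mem_univ, true_and, Finset.mem_union,
      Finset.mem_powersetCard_univ]
    exact mrk_eq_two_iff hE hs hl A
  have hdisj : Disjoint (univ.powersetCard 2)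
      (univ.filter fun A : Finset α => M.IsFlat ↑A ∧ mrk M ↑A = 2 ∧ A.card = 3) :=
    Finset.disjoint_left.2 fun A h2 h3 => by
      simp only [Finset.mem_powersetCard_univ, Finset.mem_filter] at h2 h3
      omega
  have hpairs : ∑ A ∈ (univ : Finset α).powersetCard 2, (-1 : ℤ) ^ A.card =
      (Fintype.card α).choose 2 := by
    rw [Finset.sum_congr rfl fun A hA => by rw [Finset.mem_powersetCard_univ.1 hA]]
    simp
  have hlines : ∑ A ∈ univ.filter (fun A : Finset α => M.IsFlat ↑A ∧ mrk M ↑A = 2 ∧ A.card = 3),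
      (-1 : ℤ) ^ A.card = -lineCount M 3 := by
    rw [Finset.sum_congr rfl fun A hA => by rw [(Finset.mem_filter.1 hA).2.2.2], lineCount_eq_card]
    simp
  rw [coeff_charPoly_rank_sub hr, hfilter, Finset.sum_union hdisj, hpairs, hlines, sub_eq_add_neg]

end CharPoly

lemma exists_eq_prod_X_sub_C_of_onlyIntegerRoots {p : ℤ[X]} (hp : p.Monic)
    (hroots : onlyIntegerRoots p) : ∃ s : Multiset ℤ, p = (s.map fun a => X - C a).prod := by
  have hsplit := (IsAlgClosed.splits (p.map (Int.castRingHom ℂ))).eq_prod_roots_of_monic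
    (hp.map _)
  choose k hk using hroots
  set s := (p.map (Int.castRingHom ℂ)).roots.attach.map fun z => k z.1 z.2
  have hs : s.map (Int.castRingHom ℂ) = (p.map (Int.castRingHom ℂ)).roots := by
    conv_rhs => rw [← Multiset.attach_map_val (p.map (Int.castRingHom ℂ)).roots]
    rw [Multiset.map_map]
    exact Multiset.map_congr rfl fun z _ => (hk z.1 z.2).symm
  clear_value s
  refine ⟨s, Polynomial.map_injective _ (RingHom.injective_int (Int.castRingHom ℂ)) ?_⟩
  rw [hsplit, ← hs, Polynomial.map_multiset_prod, Multiset.map_map, Multiset.map_map]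
  congr 2
  funext a
  simp

namespace Multiset

variable {R : Type*} [CommRing R]

lemma coeff_prod_X_sub_C_card_sub_one (s : Multiset R) (hs : 1 ≤ card s) :
    (s.map fun a => X - C a).prod.coeff (card s - 1) = -s.sum := by
  rw [prod_X_sub_C_coeff s (Nat.sub_le _ _), Nat.sub_sub_self hs, esymm, powersetCard_one,
    map_map]
  simp

lemma coeff_prod_X_sub_C_card_sub_two (s : Multiset R) (hs : 2 ≤ card s) :
    (s.map fun a => X - C a).prod.coeff (card s - 2) = s.esymm 2 := by
  rw [prod_X_sub_C_coeff s (Nat.sub_le _ _), Nat.sub_sub_self hs]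
  simp

lemma esymm_two_cons (a : R) (s : Multiset R) :
    (a ::ₘ s).esymm 2 = a * s.sum + s.esymm 2 := by
  rw [esymm, esymm, powersetCard_cons, map_add, sum_add, powersetCard_one, map_map, map_map,
    add_comm]
  simp only [Function.comp_def, prod_cons, prod_singleton]
  rw [sum_map_mul_left, map_id']

lemma sum_map_sq_add_two_mul_esymm_two (s : Multiset R) :
    (s.map (· ^ 2)).sum + 2 * s.esymm 2 = s.sum ^ 2 := by
  induction s using Multiset.induction_on with
  | empty => simp [esymm, powersetCard_zero_right]
  | cons a s ih =>
    rw [map_cons, sum_cons, sum_cons, esymm_two_cons]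
    linear_combination ih

lemma five_mul_sum_le_sum_sq_add_six_mul_card (s : Multiset ℤ) :
    5 * s.sum ≤ (s.map (· ^ 2)).sum + 6 * card s := by
  induction s using Multiset.induction_on with
  | empty => simp
  | cons a s ih =>
    have ha : 5 * a ≤ a ^ 2 + 6 := by
      rcases le_or_gt a 2 with h | h <;> nlinarith
    simp only [sum_cons, map_cons, card_cons]
    push_cast
    linarith

lemma five_mul_sum_add_two_le_of_one_mem {s : Multiset ℤ} (h1 : 1 ∈ s) :
    5 * s.sum + 2 ≤ (s.map (· ^ 2)).sum + 6 * card s := by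
  obtain ⟨t, rfl⟩ := exists_cons_of_mem h1
  have ht := five_mul_sum_le_sum_sq_add_six_mul_card t
  simp only [sum_cons, map_cons, card_cons]
  push_cast
  linarith

end Multiset

theorem stmt12_general {α : Type} [Fintype α] (M : Matroid α)
    (hE : M.E = Set.univ) (hsimple : mSimple M)
    (r δ : ℕ) (hr : mrk M Set.univ = r)
    (hδ : δ + 2 ≤ r)
    (hcard : Fintype.card α + 3 + δ = 3 * r)
    (hlines : linesAtMost3 M)
    (hint : onlyIntegerRoots (charPoly M)) :
    3 * r ≤ lineCount M 3 + 5 + 2 * δ := by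
  subst hr
  have : Nonempty α := Fintype.card_pos_iff.1 (by omega)
  have hmonic := monic_charPoly hE hsimple
  obtain ⟨s, hs⟩ := exists_eq_prod_X_sub_C_of_onlyIntegerRoots hmonic hint
  have hcard_s : Multiset.card s = mrk M Set.univ := by
    rw [← natDegree_charPoly hE hsimple, hs, natDegree_multiset_prod_X_sub_C_eq_card]
  have hsum : s.sum = Fintype.card α := by
    have h := coeff_charPoly_rank_sub_one hE hsimple (by omega)
    rw [hs, ← hcard_s, s.coeff_prod_X_sub_C_card_sub_one (by omega)] at h
    exact neg_inj.1 h
  have hesymm : s.esymm 2 = (Fintype.card α).choose 2 - lineCount M 3 := by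
    rw [← coeff_charPoly_rank_sub_two hE hsimple hlines (by omega), hs, ← hcard_s,
      s.coeff_prod_X_sub_C_card_sub_two (by omega)]
  have hone : (1 : ℤ) ∈ s := by
    rw [← roots_multiset_prod_X_sub_C s, ← hs, mem_roots hmonic.ne_zero]
    exact eval_one_charPoly M
  have hchoose : 2 * ((Fintype.card α).choose 2 : ℤ) = Fintype.card α * (Fintype.card α - 1) := by
    have h : (2 * (Fintype.card α).choose 2 : ℚ) = Fintype.card α * (Fintype.card α - 1) := by
      rw [Nat.cast_choose_two]; ring
    exact_mod_cast h
  have hpower := s.sum_map_sq_add_two_mul_esymm_two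
  have hquad := Multiset.five_mul_sum_add_two_le_of_one_mem hone
  rw [hcard_s, hsum] at hquad
  rw [hsum, hesymm] at hpower
  zify at hcard ⊢
  linarith

/-- Let `M` be a simple matroid of rank `r` with `3r - 3 - δ`
elements where `0 ≤ δ ≤ r - 2`, in which every line has at most 3 elements, the
characteristic roots of `M` are all integers, and `χ(M;2) = 0`.  Then `M` has at least
`3r - 5 - 2δ` three-point lines. -/
theorem stmt12 {α : Type} [Fintype α] [DecidableEq α] (M : Matroid α)
    (hE : M.E = Set.univ) (hsimple : mSimple M)
    (r δ : ℕ) (hr : mrk M Set.univ = r)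
    (hδ : δ + 2 ≤ r)
    (hcard : Fintype.card α + 3 + δ = 3 * r)
    (hlines : linesAtMost3 M)
    (hint : onlyIntegerRoots (charPoly M))
    (h2 : (charPoly M).eval 2 = 0) :
    3 * r ≤ lineCount M 3 + 5 + 2 * δ :=
  stmt12_general M hE hsimple r δ hr hδ hcard hlines hint
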